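/- arXiv:math/0605437 — 4 statements merged into one kernel-verified Lean document; each statement's English description precedes it below -/
import Mathlib

section
/- Let (ξ_k) be i.i.d. standard Gaussian and (a_k) ∈ ℓ² with a_k ≠ 0 for some k. Set ς = Σ_k a_k (ξ_k^2 - 1). For any 0 < x ≤ ‖a‖₂ / sup_k |a_k|, one has P(|ς| ≥ x √(E[ς^2])) ≤ 2 exp(-x^2/16). -/
/-!
Chernoff's method. For a standard Gaussian `ξ` and `c < 1/2`,
`E exp (c (ξ² - 1)) = e^{-c} / √(1 - 2c)`, which is at most `e^{4c²}` when `|c| ≤ 1/4`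
because `log (1 - v) ≥ -v - 2v²` for `|v| ≤ 1/2`. With `λ = x / (8 ‖a‖₂)` the hypothesis
`x ≤ ‖a‖₂ / sup |a_k|` keeps `|λ a_k| ≤ 1/8`, so by independence every partial sum
`± Σ_{k<n} a_k (ξ_k² - 1)` exceeds `x ‖a‖₂` with probability at most
`exp (-λ x ‖a‖₂ + 4 λ² ‖a‖₂²) = exp (-x²/16)`. As `x ‖a‖₂` lies strictly below the threshold
`x √(E ς²) = x √2 ‖a‖₂`, the bound passes to the limit of the partial sums.
-/

open MeasureTheory ProbabilityTheory Real Finset Filter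
open scoped ENNReal

namespace Real

lemma neg_sub_two_mul_sq_le_log_one_sub {v : ℝ} (hv : |v| ≤ 1 / 2) :
    -v - 2 * v ^ 2 ≤ log (1 - v) := by
  have hlog := abs_log_sub_add_sum_range_le (show |v| < 1 by linarith) 1
  simp only [range_one, sum_singleton, zero_add, pow_one, CharP.cast_eq_zero, div_one] at hlog
  have hrem : |v| ^ 2 / (1 - |v|) ≤ 2 * v ^ 2 := by
    rw [div_le_iff₀ (by linarith), sq_abs]
    nlinarith [sq_nonneg v]
  linarith [(abs_le.mp (hlog.trans hrem)).1]

lemma exp_neg_mul_inv_sqrt_one_sub_two_mul_le {c : ℝ} (hc : |c| ≤ 1 / 4) :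
    exp (-c) * (√(1 - 2 * c))⁻¹ ≤ exp (4 * c ^ 2) := by
  have hpos : 0 < 1 - 2 * c := by linarith [le_abs_self c]
  have hlog := neg_sub_two_mul_sq_le_log_one_sub (v := 2 * c) (by rw [abs_mul]; norm_num; linarith)
  rw [← exp_log hpos, ← exp_half, ← exp_neg, ← exp_add, exp_le_exp]
  linarith

end Real

lemma gaussianPDFReal_mul_exp_mul_sq (c x : ℝ) :
    gaussianPDFReal 0 1 x * exp (c * x ^ 2) = (√(2 * π))⁻¹ * exp (-(1 / 2 - c) * x ^ 2) := by
  rw [gaussianPDFReal, mul_assoc, ← exp_add]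
  push_cast
  ring_nf

lemma integrable_exp_mul_sq_gaussianReal {c : ℝ} (hc : c < 1 / 2) :
    Integrable (fun x => exp (c * x ^ 2)) (gaussianReal 0 1) := by
  rw [gaussianReal_of_var_ne_zero _ one_ne_zero, integrable_withDensity_iff_integrable_smul'
    (measurable_gaussianPDF 0 1) (ae_of_all _ fun _ => gaussianPDF_lt_top)]
  simp_rw [toReal_gaussianPDF, smul_eq_mul, gaussianPDFReal_mul_exp_mul_sq]
  exact (integrable_exp_neg_mul_sq (by linarith)).const_mul _

lemma integral_exp_mul_sq_gaussianReal {c : ℝ} (hc : c < 1 / 2) :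
    ∫ x, exp (c * x ^ 2) ∂gaussianReal 0 1 = (√(1 - 2 * c))⁻¹ := by
  simp_rw [integral_gaussianReal_eq_integral_smul one_ne_zero, smul_eq_mul,
    gaussianPDFReal_mul_exp_mul_sq, integral_const_mul, integral_gaussian]
  rw [← sqrt_inv, ← sqrt_mul (by positivity), ← sqrt_inv]
  congr 1
  have : 1 - 2 * c ≠ 0 := by linarith
  field_simp

section StandardGaussian

variable {Ω : Type*} [MeasurableSpace Ω] {P : Measure Ω} {X : Ω → ℝ}

lemma integrable_exp_mul_sq_sub_one (hX : HasLaw X (gaussianReal 0 1) P) {c : ℝ} (hc : c < 1 / 2) :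
    Integrable (fun ω => exp (c * (X ω ^ 2 - 1))) P := by
  have hint : Integrable (fun x => exp (c * (x ^ 2 - 1))) (gaussianReal 0 1) := by
    simp_rw [mul_sub, mul_one, sub_eq_add_neg, exp_add]
    exact (integrable_exp_mul_sq_gaussianReal hc).mul_const _
  rw [← hX.map_eq] at hint
  exact hint.comp_aemeasurable hX.aemeasurable

lemma mgf_sq_sub_one_le (hX : HasLaw X (gaussianReal 0 1) P) {c : ℝ} (hc : |c| ≤ 1 / 4) :
    mgf (fun ω => X ω ^ 2 - 1) P c ≤ exp (4 * c ^ 2) := by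
  have hc' : c < 1 / 2 := by linarith [le_abs_self c]
  calc mgf (fun ω => X ω ^ 2 - 1) P c
      = ∫ x, exp (c * (x ^ 2 - 1)) ∂gaussianReal 0 1 :=
        hX.integral_comp (f := fun x => exp (c * (x ^ 2 - 1))) (by fun_prop)
    _ = exp (-c) * (√(1 - 2 * c))⁻¹ := by
        simp_rw [mul_sub, mul_one, sub_eq_neg_add, exp_add, integral_const_mul,
          integral_exp_mul_sq_gaussianReal hc', neg_add_eq_sub]
    _ ≤ exp (4 * c ^ 2) := exp_neg_mul_inv_sqrt_one_sub_two_mul_le hc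

end StandardGaussian

section WeightedSum

variable {Ω : Type*} [MeasurableSpace Ω] {μ : Measure Ω} [IsProbabilityMeasure μ]
  {ξ : ℕ → Ω → ℝ}

lemma measureReal_le_sum_range_mul_sq_sub_one_le (hmeas : ∀ k, Measurable (ξ k))
    (hindep : iIndepFun ξ μ) (hgauss : ∀ k, μ.map (ξ k) = gaussianReal 0 1)
    (a : ℕ → ℝ) (n : ℕ) {l : ℝ} (hl : 0 ≤ l) (hla : ∀ k, |l * a k| ≤ 1 / 4) (s : ℝ) :
    μ.real {ω | s ≤ ∑ k ∈ range n, a k * (ξ k ω ^ 2 - 1)}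
      ≤ exp (-l * s + 4 * l ^ 2 * ∑ k ∈ range n, a k ^ 2) := by
  set Y : ℕ → Ω → ℝ := fun k ω => a k * (ξ k ω ^ 2 - 1)
  have hlaw k : HasLaw (ξ k) (gaussianReal 0 1) μ := ⟨(hmeas k).aemeasurable, hgauss k⟩
  have hYmeas k : Measurable (Y k) := by fun_prop
  have hYindep : iIndepFun Y μ :=
    hindep.comp (fun k y => a k * (y ^ 2 - 1)) fun k => by fun_prop
  have hYmgf k : mgf (Y k) μ l ≤ exp (4 * (l * a k) ^ 2) := by
    rw [mgf_const_mul, mul_comm]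
    exact mgf_sq_sub_one_le (hlaw k) (hla k)
  have hYint k : Integrable (fun ω => exp (l * Y k ω)) μ := by
    simp_rw [Y, ← mul_assoc]
    exact integrable_exp_mul_sq_sub_one (hlaw k) (by linarith [le_abs_self (l * a k), hla k])
  calc μ.real {ω | s ≤ ∑ k ∈ range n, a k * (ξ k ω ^ 2 - 1)}
      = μ.real {ω | s ≤ (∑ k ∈ range n, Y k) ω} := by simp only [Y, Finset.sum_apply]
    _ ≤ exp (-l * s) * mgf (∑ k ∈ range n, Y k) μ l :=
        measure_ge_le_exp_mul_mgf s hl (hYindep.integrable_exp_mul_sum hYmeas fun k _ => hYint k)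
    _ ≤ exp (-l * s) * ∏ k ∈ range n, exp (4 * (l * a k) ^ 2) := by
        rw [hYindep.mgf_sum hYmeas]
        gcongr with k
        · exact fun k _ => mgf_nonneg
        · exact hYmgf k
    _ = exp (-l * s + 4 * l ^ 2 * ∑ k ∈ range n, a k ^ 2) := by
        rw [← exp_sum, ← exp_add, mul_sum]
        simp_rw [mul_pow, mul_assoc]

lemma measure_le_abs_sum_range_mul_sq_sub_one_le (hmeas : ∀ k, Measurable (ξ k))
    (hindep : iIndepFun ξ μ) (hgauss : ∀ k, μ.map (ξ k) = gaussianReal 0 1)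
    (a : ℕ → ℝ) (n : ℕ) {l : ℝ} (hl : 0 ≤ l) (hla : ∀ k, |l * a k| ≤ 1 / 4) (s : ℝ) :
    μ {ω | s ≤ |∑ k ∈ range n, a k * (ξ k ω ^ 2 - 1)|}
      ≤ ENNReal.ofReal (2 * exp (-l * s + 4 * l ^ 2 * ∑ k ∈ range n, a k ^ 2)) := by
  have tail (b : ℕ → ℝ) (hb : ∀ k, |l * b k| = |l * a k|) (hb2 : ∀ k, b k ^ 2 = a k ^ 2) :
      μ {ω | s ≤ ∑ k ∈ range n, b k * (ξ k ω ^ 2 - 1)}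
        ≤ ENNReal.ofReal (exp (-l * s + 4 * l ^ 2 * ∑ k ∈ range n, a k ^ 2)) := by
    rw [← ofReal_measureReal, ← sum_congr rfl fun k _ => hb2 k]
    exact ENNReal.ofReal_le_ofReal <| measureReal_le_sum_range_mul_sq_sub_one_le hmeas hindep
      hgauss b n hl (fun k => (hb k).trans_le (hla k)) s
  have hsplit : {ω | s ≤ |∑ k ∈ range n, a k * (ξ k ω ^ 2 - 1)|}
      ⊆ {ω | s ≤ ∑ k ∈ range n, a k * (ξ k ω ^ 2 - 1)}
        ∪ {ω | s ≤ ∑ k ∈ range n, -a k * (ξ k ω ^ 2 - 1)} := by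
    intro ω hω
    rcases le_abs'.mp (Set.mem_ofPred_eq ▸ hω) with h | h
    · right
      simp only [Set.mem_ofPred_eq, neg_mul, sum_neg_distrib]
      linarith
    · exact Or.inl h
  calc _ ≤ _ := measure_mono hsplit
    _ ≤ _ := measure_union_le _ _
    _ ≤ _ := add_le_add (tail a (fun _ => rfl) fun _ => rfl)
        (tail (-a) (fun k => by simp [abs_mul]) fun k => by simp)
    _ = _ := by rw [← ENNReal.ofReal_add (by positivity) (by positivity), two_mul]

end WeightedSum

lemma measure_le_abs_tsum_le_of_forall_sum_range {Ω : Type*} [MeasurableSpace Ω]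
    (μ : Measure Ω) {f : ℕ → Ω → ℝ} {s t : ℝ} {C : ℝ≥0∞} (hst : s < t) (ht : 0 < t)
    (h : ∀ n, μ {ω | s ≤ |∑ k ∈ range n, f k ω|} ≤ C) :
    μ {ω | t ≤ |∑' k, f k ω|} ≤ C := by
  set B : ℕ → Set Ω := fun N => {ω | ∀ n ≥ N, s ≤ |∑ k ∈ range n, f k ω|}
  have hB : Monotone B := fun N M hNM ω hω n hn => hω n (hNM.trans hn)
  have hBh N : B N ⊆ {ω | s ≤ |∑ k ∈ range N, f k ω|} := fun ω hω => hω N le_rfl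
  have hsub : {ω | t ≤ |∑' k, f k ω|} ⊆ ⋃ N, B N := by
    intro ω hω
    -- a divergent series has `tsum` equal to `0 < t`
    have hsum : Summable (f · ω) := by
      by_contra hns
      simp only [Set.mem_ofPred_eq, tsum_eq_zero_of_not_summable hns, abs_zero] at hω
      linarith
    obtain ⟨N, hN⟩ := eventually_atTop.mp <|
      hsum.hasSum.tendsto_sum_nat.abs.eventually_const_le (hst.trans_le hω)
    exact Set.mem_iUnion.mpr ⟨N, hN⟩
  calc μ {ω | t ≤ |∑' k, f k ω|} ≤ μ (⋃ N, B N) := measure_mono hsub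
    _ = ⨆ N, μ (B N) := hB.measure_iUnion
    _ ≤ C := iSup_le fun N => (measure_mono (hBh N)).trans (h N)

lemma abs_le_sqrt_tsum_sq {a : ℕ → ℝ} (ha : Summable (fun k => a k ^ 2)) (k : ℕ) :
    |a k| ≤ √(∑' k, a k ^ 2) :=
  abs_le_sqrt (ha.le_tsum k fun j _ => sq_nonneg (a j))

/-- With (ξ_k) i.i.d. N(0,1), (a_k) ∈ ℓ² not identically zero, and
ς = Σ_k a_k (ξ_k² - 1), for any 0 < x ≤ ‖a‖₂ / sup_k |a_k| one has
P(|ς| ≥ x √(E[ς²])) ≤ 2 exp(-x²/16), where E[ς²] = 2 Σ_k a_k². -/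
theorem stmt3 {Ω : Type*} [MeasurableSpace Ω] (μ : Measure Ω) [IsProbabilityMeasure μ]
    (ξ : ℕ → Ω → ℝ) (hmeas : ∀ k, Measurable (ξ k))
    (hindep : iIndepFun ξ μ)
    (hgauss : ∀ k, Measure.map (ξ k) μ = gaussianReal 0 1)
    (a : ℕ → ℝ) (ha : Summable (fun k => (a k) ^ 2)) (hne : ∃ k, a k ≠ 0)
    (x : ℝ) (hx : 0 < x)
    (hxle : x ≤ Real.sqrt (∑' k, (a k) ^ 2) / (⨆ k, |a k|)) :
    μ {ω | x * Real.sqrt (2 * ∑' k, (a k) ^ 2) ≤ |∑' k, a k * ((ξ k ω) ^ 2 - 1)|}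
      ≤ ENNReal.ofReal (2 * Real.exp (-x ^ 2 / 16)) := by
  set S := ∑' k, a k ^ 2
  obtain ⟨k₀, hk₀⟩ := hne
  have hbdd : BddAbove (Set.range fun k => |a k|) :=
    ⟨√S, Set.forall_mem_range.mpr (abs_le_sqrt_tsum_sq ha)⟩
  have hsup : 0 < ⨆ k, |a k| := (abs_pos.mpr hk₀).trans_le (le_ciSup hbdd k₀)
  have hS : 0 < S := sqrt_pos.mp (hsup.trans_le (ciSup_le (abs_le_sqrt_tsum_sq ha)))
  have hxa k : x * |a k| ≤ √S :=
    (mul_le_mul_of_nonneg_left (le_ciSup hbdd k) hx.le).trans ((le_div_iff₀ hsup).mp hxle)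
  set l := x / (8 * √S)
  have hla k : |l * a k| ≤ 1 / 4 := by
    rw [abs_mul, abs_of_pos (by positivity : 0 < l), div_mul_eq_mul_div,
      div_le_iff₀ (by positivity)]
    linarith [hxa k, sqrt_nonneg S]
  refine measure_le_abs_tsum_le_of_forall_sum_range μ (s := x * √S) ?_ (by positivity)
    fun n => (measure_le_abs_sum_range_mul_sq_sub_one_le hmeas hindep hgauss a n
      (by positivity) hla (x * √S)).trans (ENNReal.ofReal_le_ofReal ?_)
  · exact mul_lt_mul_of_pos_left (sqrt_lt_sqrt hS.le (by linarith)) hx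
  · gcongr
    calc -l * (x * √S) + 4 * l ^ 2 * ∑ k ∈ range n, a k ^ 2
        ≤ -l * (x * √S) + 4 * l ^ 2 * S := by
          gcongr
          exact ha.sum_le_tsum _ fun k _ => sq_nonneg (a k)
      _ = -x ^ 2 / 16 := by
          have hsq : √S ^ 2 = S := sq_sqrt hS.le
          simp only [l]
          field_simp
          rw [hsq]
          ring
end

section
/- Let x = f₀ cos(2πkθ) + εξ and x* = f₀ sin(2πkθ) + εξ*, where ξ, ξ* are independent N(0,1), and f₀ ~ N(f̄, σ²) is independent of (ξ, ξ*), with ε > 0, σ > 0, k a positive integer. Then the Fisher information for θ based on observing (x, x*) equals ε^{-2} (f̄² + σ⁴/(ε² + σ²)) (2πk)². -/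
/-!
Write `φ = 2πkθ`, `v = x cos φ + x* sin φ` and `w = x* cos φ - x sin φ`. Completing the square
in `f₀` shows that `(x, x*)` has density `N(f̄, σ² + ε²)(v) · N(0, ε²)(w)`. Since `v' = 2πk w`
and `w' = -2πk v` as functions of `θ`, the score is
`2πk · w · (f̄/ε² + (1/ε² - 1/(σ² + ε²)) (v - f̄))`. The rotation `(x, x*) ↦ (v, w)` preserves
Lebesgue measure, so the Fisher information splits into a second moment of `N(f̄, σ² + ε²)`
times the second moment `ε²` of `N(0, ε²)`.
-/

open Real MeasureTheory

/-- Marginal density of the observations (x, x*) in the two-observation Gaussian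
model x = f₀cos(2πkθ) + εξ, x* = f₀sin(2πkθ) + εξ*, with f₀ ~ N(f̄, σ²)
independent of the independent standard Gaussian pair (ξ, ξ*): the density is
obtained by integrating the joint Gaussian density over the value u of f₀. -/
noncomputable def pdens (k : ℕ) (ε σ fbar : ℝ) (θ x y : ℝ) : ℝ :=
  ∫ u : ℝ, (Real.exp (-(u - fbar) ^ 2 / (2 * σ ^ 2)) / (σ * Real.sqrt (2 * π))) *
    (Real.exp (-((x - u * Real.cos (2 * π * k * θ)) ^ 2
        + (y - u * Real.sin (2 * π * k * θ)) ^ 2) / (2 * ε ^ 2)) / (2 * π * ε ^ 2))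

open scoped NNReal

namespace ProbabilityTheory

section Moments

variable {μ : ℝ} {v : ℝ≥0}

theorem integrable_mul_gaussianPDFReal (hv : v ≠ 0) {f : ℝ → ℝ}
    (hf : Integrable f (gaussianReal μ v)) :
    Integrable (fun u ↦ f u * gaussianPDFReal μ v u) := by
  rw [gaussianReal_of_var_ne_zero μ hv, integrable_withDensity_iff_integrable_smul'
    (measurable_gaussianPDF μ v) (ae_of_all _ fun _ ↦ gaussianPDF_lt_top)] at hf
  simpa only [toReal_gaussianPDF, smul_eq_mul, mul_comm] using hf

theorem memLp_two_affine_gaussianReal (p q : ℝ) :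
    MemLp (fun u ↦ p + q * (u - μ)) 2 (gaussianReal μ v) :=
  (memLp_const p).add (((memLp_id_gaussianReal 2).sub (memLp_const μ)).const_mul q)

theorem integral_affine_gaussianReal (p q : ℝ) :
    ∫ u, (p + q * (u - μ)) ∂gaussianReal μ v = p := by
  have hid : Integrable (fun u ↦ u) (gaussianReal μ v) :=
    (memLp_id_gaussianReal 1).integrable le_rfl
  have hcentered : Integrable (fun u ↦ u - μ) (gaussianReal μ v) := hid.sub (integrable_const μ)
  rw [integral_add (integrable_const p) (hcentered.const_mul q), integral_const_mul,
    integral_sub hid (integrable_const μ)]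
  simp [integral_id_gaussianReal]

theorem variance_affine_gaussianReal (p q : ℝ) :
    Var[fun u ↦ p + q * (u - μ); gaussianReal μ v] = q ^ 2 * v := by
  rw [variance_const_add (by fun_prop), variance_const_mul, variance_sub_const (by fun_prop),
    variance_fun_id_gaussianReal]

theorem integral_sq_affine_mul_gaussianPDFReal (hv : v ≠ 0) (p q : ℝ) :
    ∫ u, (p + q * (u - μ)) ^ 2 * gaussianPDFReal μ v u = p ^ 2 + q ^ 2 * v := by
  have h := variance_eq_sub (memLp_two_affine_gaussianReal (μ := μ) (v := v) p q)
  rw [variance_affine_gaussianReal, integral_affine_gaussianReal,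
    integral_gaussianReal_eq_integral_smul hv] at h
  simp only [Pi.pow_apply, smul_eq_mul] at h
  simp_rw [mul_comm _ (gaussianPDFReal μ v _)]
  linarith

theorem integrable_sq_affine_mul_gaussianPDFReal (hv : v ≠ 0) (p q : ℝ) :
    Integrable (fun u ↦ (p + q * (u - μ)) ^ 2 * gaussianPDFReal μ v u) :=
  integrable_mul_gaussianPDFReal hv (memLp_two_affine_gaussianReal p q).integrable_sq

end Moments

/-- The first factor on the right is the posterior density of `u` given `(x, y)`. -/
theorem gaussianPDFReal_mul_gaussianPDFReal_mul_gaussianPDFReal {s e : ℝ≥0} (hs : s ≠ 0)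
    (he : e ≠ 0) {a b : ℝ} (hab : a ^ 2 + b ^ 2 = 1) (m u x y : ℝ) :
    gaussianPDFReal m s u * (gaussianPDFReal (u * a) e x * gaussianPDFReal (u * b) e y) =
      gaussianPDFReal ((m * e + (x * a + y * b) * s) / (s + e)) (s * e / (s + e)) u *
        (gaussianPDFReal m (s + e) (x * a + y * b) * gaussianPDFReal 0 e (y * a - x * b)) := by
  have hs' : (0 : ℝ) < s := NNReal.coe_pos.2 (pos_iff_ne_zero.2 hs)
  have he' : (0 : ℝ) < e := NNReal.coe_pos.2 (pos_iff_ne_zero.2 he)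
  set V := x * a + y * b
  set W := y * a - x * b
  have hsq : (x - u * a) ^ 2 + (y - u * b) ^ 2 = (V - u) ^ 2 + W ^ 2 := by
    linear_combination (u ^ 2 - x ^ 2 - y ^ 2) * hab
  have hconst : (√(2 * π * s))⁻¹ * (√(2 * π * e))⁻¹ =
      (√(2 * π * (s * e / (s + e))))⁻¹ * (√(2 * π * (s + e)))⁻¹ := by
    rw [← mul_inv, ← mul_inv, ← sqrt_mul (by positivity), ← sqrt_mul (by positivity)]
    congr 2
    field_simp
  have hexp : -(u - m) ^ 2 / (2 * s) + -(x - u * a) ^ 2 / (2 * e) + -(y - u * b) ^ 2 / (2 * e) =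
      -(u - (m * e + V * s) / (s + e)) ^ 2 / (2 * (s * e / (s + e))) +
        -(V - m) ^ 2 / (2 * (s + e)) + -(W - 0) ^ 2 / (2 * e) := by
    calc _ = -(u - m) ^ 2 / (2 * s) - ((x - u * a) ^ 2 + (y - u * b) ^ 2) / (2 * e) := by ring
      _ = _ := by rw [hsq]; field_simp; ring
  simp only [gaussianPDFReal, NNReal.coe_div, NNReal.coe_mul, NNReal.coe_add]
  calc _ = (√(2 * π * s))⁻¹ * (√(2 * π * e))⁻¹ * (√(2 * π * e))⁻¹ *
        rexp (-(u - m) ^ 2 / (2 * s) + -(x - u * a) ^ 2 / (2 * e) + -(y - u * b) ^ 2 / (2 * e)) := by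
          rw [exp_add, exp_add]; ring
    _ = _ := by rw [hconst, hexp, exp_add, exp_add]; ring

theorem integral_gaussianPDFReal_mul_gaussianPDFReal_mul_gaussianPDFReal {s e : ℝ≥0} (hs : s ≠ 0)
    (he : e ≠ 0) {a b : ℝ} (hab : a ^ 2 + b ^ 2 = 1) (m x y : ℝ) :
    ∫ u, gaussianPDFReal m s u * (gaussianPDFReal (u * a) e x * gaussianPDFReal (u * b) e y) =
      gaussianPDFReal m (s + e) (x * a + y * b) * gaussianPDFReal 0 e (y * a - x * b) := by
  simp_rw [gaussianPDFReal_mul_gaussianPDFReal_mul_gaussianPDFReal hs he hab]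
  rw [integral_mul_const, integral_gaussianPDFReal_eq_one _ (by positivity), one_mul]

theorem hasDerivAt_log_gaussianPDFReal (μ : ℝ) {v : ℝ≥0} (hv : v ≠ 0) (z : ℝ) :
    HasDerivAt (fun z ↦ log (gaussianPDFReal μ v z)) (-(z - μ) / v) z := by
  have hlog : (fun z ↦ log (gaussianPDFReal μ v z)) =
      fun z ↦ log (√(2 * π * v))⁻¹ - (z - μ) ^ 2 / (2 * v) := by
    ext z
    rw [gaussianPDFReal, log_mul (by positivity) (exp_ne_zero _), log_exp, neg_div,
      ← sub_eq_add_neg]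
  rw [hlog]
  have hv' : (v : ℝ) ≠ 0 := by exact_mod_cast hv
  refine ((((hasDerivAt_id' z).sub_const μ).fun_pow 2).div_const (2 * (v : ℝ))).const_sub
    (log (√(2 * π * v))⁻¹) |>.congr_deriv ?_
  field_simp
  ring

end ProbabilityTheory

open ProbabilityTheory

theorem integral_integral_comp_rotate {F : ℝ × ℝ → ℝ} (hF : Integrable F) (φ : ℝ) :
    ∫ x, ∫ y, F (x * cos φ + y * sin φ, y * cos φ - x * sin φ) = ∫ x, ∫ y, F (x, y) := by
  let R : ℝ × ℝ ≃ᵐ ℝ × ℝ := Complex.measurableEquivRealProd.symm.trans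
    ((rotation (Circle.exp (-φ))).toMeasurableEquiv.trans Complex.measurableEquivRealProd)
  have hR : MeasurePreserving R :=
    (Complex.volume_preserving_equiv_real_prod.comp (rotation _).measurePreserving).comp
      Complex.volume_preserving_equiv_real_prod.symm
  have hR_apply (x y : ℝ) : R (x, y) = (x * cos φ + y * sin φ, y * cos φ - x * sin φ) := by
    simp only [R, MeasurableEquiv.trans_apply, Complex.measurableEquivRealProd_symm_apply,
      LinearIsometryEquiv.coe_toMeasurableEquiv, rotation_apply,
      Complex.measurableEquivRealProd_apply, Circle.coe_exp, Complex.mul_re, Complex.mul_im,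
      Complex.exp_ofReal_mul_I_re, Complex.exp_ofReal_mul_I_im, cos_neg, sin_neg]
    ext <;> ring
  simp only [← hR_apply]
  calc ∫ x, ∫ y, F (R (x, y)) = ∫ p, F (R p) :=
        (integral_prod _ (hR.integrable_comp_of_integrable hF)).symm
    _ = ∫ p, F p := hR.integral_comp' F
    _ = ∫ x, ∫ y, F (x, y) := integral_prod _ hF

theorem hasDerivAt_rotate_fst (ω x y t : ℝ) :
    HasDerivAt (fun t ↦ x * cos (ω * t) + y * sin (ω * t))
      (ω * (y * cos (ω * t) - x * sin (ω * t))) t := by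
  have hω : HasDerivAt (fun t ↦ ω * t) ω t := by simpa using (hasDerivAt_id' t).const_mul ω
  exact ((hω.cos.const_mul x).add (hω.sin.const_mul y)).congr_deriv (by ring)

theorem hasDerivAt_rotate_snd (ω x y t : ℝ) :
    HasDerivAt (fun t ↦ y * cos (ω * t) - x * sin (ω * t))
      (-(ω * (x * cos (ω * t) + y * sin (ω * t)))) t := by
  have hω : HasDerivAt (fun t ↦ ω * t) ω t := by simpa using (hasDerivAt_id' t).const_mul ω
  exact ((hω.cos.const_mul y).sub (hω.sin.const_mul x)).congr_deriv (by ring)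

theorem pdens_eq_integral_gaussianPDFReal (k : ℕ) (ε : ℝ) {σ : ℝ} (hσ : 0 < σ) (fbar t x y : ℝ) :
    pdens k ε σ fbar t x y = ∫ u, gaussianPDFReal fbar (σ ^ 2).toNNReal u *
      (gaussianPDFReal (u * cos (2 * π * k * t)) (ε ^ 2).toNNReal x *
        gaussianPDFReal (u * sin (2 * π * k * t)) (ε ^ 2).toNNReal y) := by
  refine integral_congr_ae (ae_of_all _ fun u ↦ ?_)
  simp only [gaussianPDFReal, Real.coe_toNNReal _ (sq_nonneg _)]
  have hσ' : √(2 * π * σ ^ 2) = σ * √(2 * π) := by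
    rw [sqrt_mul (by positivity), sqrt_sq hσ.le, mul_comm]
  have hε' : (√(2 * π * ε ^ 2))⁻¹ * (√(2 * π * ε ^ 2))⁻¹ = (2 * π * ε ^ 2)⁻¹ := by
    rw [← mul_inv, mul_self_sqrt (by positivity)]
  rw [hσ', neg_add, add_div, exp_add, div_eq_mul_inv, div_eq_mul_inv _ (2 * π * ε ^ 2), ← hε']
  ring

theorem pdens_eq_gaussianPDFReal_mul (k : ℕ) {ε σ : ℝ} (hε : ε ≠ 0) (hσ : 0 < σ)
    (fbar t x y : ℝ) :
    pdens k ε σ fbar t x y =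
      gaussianPDFReal fbar ((σ ^ 2).toNNReal + (ε ^ 2).toNNReal)
          (x * cos (2 * π * k * t) + y * sin (2 * π * k * t)) *
        gaussianPDFReal 0 (ε ^ 2).toNNReal (y * cos (2 * π * k * t) - x * sin (2 * π * k * t)) := by
  rw [pdens_eq_integral_gaussianPDFReal k ε hσ,
    integral_gaussianPDFReal_mul_gaussianPDFReal_mul_gaussianPDFReal (by positivity)
      (by positivity) (cos_sq_add_sin_sq _)]

theorem deriv_log_pdens (k : ℕ) {ε σ : ℝ} (hε : ε ≠ 0) (hσ : 0 < σ) (fbar θ x y : ℝ) :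
    deriv (fun t ↦ log (pdens k ε σ fbar t x y)) θ =
      2 * π * k * (y * cos (2 * π * k * θ) - x * sin (2 * π * k * θ)) *
        (fbar / ε ^ 2 + (1 / ε ^ 2 - 1 / (σ ^ 2 + ε ^ 2)) *
          (x * cos (2 * π * k * θ) + y * sin (2 * π * k * θ) - fbar)) := by
  have hτ : (σ ^ 2).toNNReal + (ε ^ 2).toNNReal ≠ 0 := by positivity
  have he : (ε ^ 2).toNNReal ≠ 0 := by positivity
  have hlog : (fun t ↦ log (pdens k ε σ fbar t x y)) = fun t ↦
      log (gaussianPDFReal fbar ((σ ^ 2).toNNReal + (ε ^ 2).toNNReal)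
          (x * cos (2 * π * k * t) + y * sin (2 * π * k * t))) +
        log (gaussianPDFReal 0 (ε ^ 2).toNNReal
          (y * cos (2 * π * k * t) - x * sin (2 * π * k * t))) := by
    ext t
    rw [pdens_eq_gaussianPDFReal_mul k hε hσ,
      log_mul (gaussianPDFReal_pos _ _ _ hτ).ne' (gaussianPDFReal_pos _ _ _ he).ne']
  rw [hlog]
  refine (((hasDerivAt_log_gaussianPDFReal _ hτ _).comp θ (hasDerivAt_rotate_fst _ x y θ)).add
    ((hasDerivAt_log_gaussianPDFReal _ he _).comp θ (hasDerivAt_rotate_snd _ x y θ))).deriv.trans ?_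
  simp only [NNReal.coe_add, Real.coe_toNNReal _ (sq_nonneg _)]
  field_simp
  ring

theorem stmt4_general (k : ℕ) (ε σ fbar : ℝ) (hε : 0 < ε) (hσ : 0 < σ) (θ : ℝ) :
    ∫ x : ℝ, ∫ y : ℝ,
        (deriv (fun t => Real.log (pdens k ε σ fbar t x y)) θ) ^ 2 * pdens k ε σ fbar θ x y
      = (fbar ^ 2 + σ ^ 4 / (ε ^ 2 + σ ^ 2)) * (2 * π * k) ^ 2 / ε ^ 2 := by
  set τ := (σ ^ 2).toNNReal + (ε ^ 2).toNNReal
  set e := (ε ^ 2).toNNReal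
  have hτ : τ ≠ 0 := by positivity
  have he : e ≠ 0 := by positivity
  set p := fbar / ε ^ 2
  set q := 1 / ε ^ 2 - 1 / (σ ^ 2 + ε ^ 2)
  let G : ℝ → ℝ := fun v ↦ (p + q * (v - fbar)) ^ 2 * gaussianPDFReal fbar τ v
  -- in the shape of `integral_sq_affine_mul_gaussianPDFReal`
  let H : ℝ → ℝ := fun w ↦ (0 + 1 * (w - 0)) ^ 2 * gaussianPDFReal 0 e w
  have hpoint (x y : ℝ) :
      deriv (fun t ↦ log (pdens k ε σ fbar t x y)) θ ^ 2 * pdens k ε σ fbar θ x y =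
        (2 * π * k) ^ 2 * (G (x * cos (2 * π * k * θ) + y * sin (2 * π * k * θ)) *
          H (y * cos (2 * π * k * θ) - x * sin (2 * π * k * θ))) := by
    rw [deriv_log_pdens k hε.ne' hσ, pdens_eq_gaussianPDFReal_mul k hε.ne' hσ]
    simp only [G, H]
    ring
  have hGH : Integrable (fun z : ℝ × ℝ ↦ G z.1 * H z.2) :=
    (integrable_sq_affine_mul_gaussianPDFReal hτ p q).mul_prod
      (integrable_sq_affine_mul_gaussianPDFReal he 0 1)
  simp_rw [hpoint, integral_const_mul]
  rw [integral_integral_comp_rotate hGH]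
  simp_rw [integral_const_mul, integral_mul_const]
  rw [integral_sq_affine_mul_gaussianPDFReal hτ, integral_sq_affine_mul_gaussianPDFReal he]
  simp only [τ, e, NNReal.coe_add, Real.coe_toNNReal _ (sq_nonneg _), p, q]
  field_simp
  ring

/-- The Fisher information for θ in the two-observation model equals
ε⁻² (f̄² + σ⁴/(ε² + σ²)) (2πk)². -/
theorem stmt4 (k : ℕ) (hk : 1 ≤ k) (ε σ fbar : ℝ) (hε : 0 < ε) (hσ : 0 < σ) (θ : ℝ) :
    ∫ x : ℝ, ∫ y : ℝ,
        (deriv (fun t => Real.log (pdens k ε σ fbar t x y)) θ) ^ 2 * pdens k ε σ fbar θ x y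
      = (fbar ^ 2 + σ ^ 4 / (ε ^ 2 + σ ^ 2)) * (2 * π * k) ^ 2 / ε ^ 2 :=
  stmt4_general k ε σ fbar hε hσ θ
end

section
/- Let β > 1, ε > 0, W > 0, q_k = max(0, 1 - (k/W)^{β-1}), and s_k² = ε² q_k/(1-q_k) when q_k < 1 (i.e., s_k² = ε² max(0, (W/k)^{β-1} - 1)). Then for every sequence (f_k) with Σ_k (2πk)^{2β} f_k² ≤ Σ_k (2πk)^{2β} s_k², the functional R[f,q] = Σ_k (2πk)² [(1-q_k)² f_k² + ε² q_k²] satisfies R[f,q] ≤ Σ_k (2πk)² [(1-q_k)² s_k² + ε² q_k²] = ε² Σ_k (2πk)² q_k. -/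
/-!
The Pinsker weights satisfy `(2πk)² (1 - q_k)² ≤ λ (2πk)^{2β}` with `λ = (2πW)^{2-2β}`, with
equality wherever `s_k ≠ 0`. Hence the bias part `Σ (2πk)² (1 - q_k)² f_k²` is at most `λ` times
the Sobolev energy of `f`, which the constraint bounds by the energy of `s`, and for `s` the
whole chain is an equality. The value `ε² Σ (2πk)² q_k` comes from the pointwise identity
`(1 - q)² q / (1 - q) + q² = q`.
-/

open Real Finset

theorem tsum_mul_add_le_of_le_mul_of_mul_eq {ι : Type*} {a b u v r : ι → ℝ} {c : ℝ}
    (hc : 0 ≤ c) (ha : ∀ k, 0 ≤ a k) (hu : ∀ k, 0 ≤ u k) (hab : ∀ k, a k ≤ c * b k)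
    (hav : ∀ k, a k * v k = c * (b k * v k)) (hbu : Summable fun k => b k * u k)
    (hbv : Summable fun k => b k * v k) (hr : Summable r)
    (h : ∑' k, b k * u k ≤ ∑' k, b k * v k) :
    ∑' k, (a k * u k + r k) ≤ ∑' k, (a k * v k + r k) := by
  have hau_le : ∀ k, a k * u k ≤ c * (b k * u k) := fun k => by
    rw [← mul_assoc]; exact mul_le_mul_of_nonneg_right (hab k) (hu k)
  have hau : Summable fun k => a k * u k :=
    (hbu.mul_left c).of_nonneg_of_le (fun k => mul_nonneg (ha k) (hu k)) hau_le
  have hav' : Summable fun k => a k * v k := by simpa only [hav] using hbv.mul_left c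
  have key : ∑' k, a k * u k ≤ ∑' k, a k * v k := calc
    ∑' k, a k * u k ≤ ∑' k, c * (b k * u k) := hau.tsum_le_tsum hau_le (hbu.mul_left c)
    _ = c * ∑' k, b k * u k := tsum_mul_left
    _ ≤ c * ∑' k, b k * v k := mul_le_mul_of_nonneg_left h hc
    _ = ∑' k, a k * v k := by rw [← tsum_mul_left]; exact tsum_congr fun k => (hav k).symm
  rw [hau.tsum_add hr, hav'.tsum_add hr]
  linarith

theorem summable_of_forall_le_eq_zero {g : ℕ → ℝ} {N : ℕ} (h : ∀ k, N ≤ k → g k = 0) :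
    Summable g :=
  summable_of_ne_finset_zero (s := range N) fun k hk => h k (by simpa using hk)

theorem sq_mul_rpow_div_sq {c d : ℝ} (hc : 0 < c) (hd : 0 < d) (β : ℝ) :
    c ^ 2 * ((c / d) ^ (β - 1)) ^ 2 = d ^ (2 - 2 * β) * c ^ (2 * β) := by
  rw [← rpow_mul_natCast (div_pos hc hd).le, div_rpow hc.le hd.le,
    show (2 : ℝ) - 2 * β = -((β - 1) * (2 : ℕ)) by push_cast; ring, rpow_neg hd.le,
    show 2 * β = (β - 1) * (2 : ℕ) + (2 : ℕ) by push_cast; ring, rpow_add hc, rpow_natCast]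
  field_simp

section Pinsker

variable {p x : ℝ}

noncomputable def pinskerWeight (p x : ℝ) : ℝ := max 0 (1 - x ^ p)

/-- For `x ≤ 1` this is `q / (1 - q)` with `q = pinskerWeight p x`. -/
noncomputable def pinskerRatio (p x : ℝ) : ℝ := max 0 (x⁻¹ ^ p - 1)

theorem pinskerWeight_eq_zero (hp : 0 ≤ p) (hx : 1 ≤ x) : pinskerWeight p x = 0 :=
  max_eq_left (by linarith [one_le_rpow hx hp])

theorem pinskerRatio_eq_zero (hp : 0 ≤ p) (hx : 1 ≤ x) : pinskerRatio p x = 0 :=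
  max_eq_left (by linarith [rpow_le_one (by positivity) (inv_le_one_of_one_le₀ hx) hp])

theorem one_sub_pinskerWeight (hp : 0 ≤ p) (hx₀ : 0 ≤ x) (hx : x ≤ 1) :
    1 - pinskerWeight p x = x ^ p := by
  rw [pinskerWeight, max_eq_right (by linarith [rpow_le_one hx₀ hx hp])]
  ring

theorem pinskerRatio_eq (hp : 0 ≤ p) (hx₀ : 0 < x) (hx : x ≤ 1) :
    pinskerRatio p x = (x ^ p)⁻¹ - 1 := by
  rw [pinskerRatio, inv_rpow hx₀.le]
  have h₁ : 1 ≤ (x ^ p)⁻¹ := one_le_inv_iff₀.2 ⟨rpow_pos_of_pos hx₀ p, rpow_le_one hx₀.le hx hp⟩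
  exact max_eq_right (by linarith)

theorem one_sub_pinskerWeight_sq_le (hp : 0 ≤ p) (hx₀ : 0 ≤ x) :
    (1 - pinskerWeight p x) ^ 2 ≤ (x ^ p) ^ 2 := by
  rcases le_total x 1 with hx | hx
  · rw [one_sub_pinskerWeight hp hx₀ hx]
  · rw [pinskerWeight_eq_zero hp hx]
    nlinarith [one_le_rpow hx hp]

theorem one_sub_pinskerWeight_sq_mul_pinskerRatio (hp : 0 ≤ p) (hx₀ : 0 ≤ x) :
    (1 - pinskerWeight p x) ^ 2 * pinskerRatio p x = (x ^ p) ^ 2 * pinskerRatio p x := by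
  rcases le_total x 1 with hx | hx
  · rw [one_sub_pinskerWeight hp hx₀ hx]
  · rw [pinskerRatio_eq_zero hp hx, mul_zero, mul_zero]

theorem one_sub_pinskerWeight_sq_mul_pinskerRatio_add_sq (hp : 0 ≤ p) (hx₀ : 0 < x) :
    (1 - pinskerWeight p x) ^ 2 * pinskerRatio p x + pinskerWeight p x ^ 2 =
      pinskerWeight p x := by
  rcases le_total x 1 with hx | hx
  · have h₁ : 1 - pinskerWeight p x ≠ 0 := by
      rw [one_sub_pinskerWeight hp hx₀.le hx]; exact (rpow_pos_of_pos hx₀ p).ne'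
    rw [pinskerRatio_eq hp hx₀ hx, ← one_sub_pinskerWeight hp hx₀.le hx]
    field_simp
    ring
  · rw [pinskerWeight_eq_zero hp hx, pinskerRatio_eq_zero hp hx]
    ring

variable {β ω Ω : ℝ}

theorem sq_mul_one_sub_pinskerWeight_sq_le (hβ : 1 ≤ β) (hω : 0 < ω) (hΩ : 0 < Ω) :
    ω ^ 2 * (1 - pinskerWeight (β - 1) (ω / Ω)) ^ 2 ≤ Ω ^ (2 - 2 * β) * ω ^ (2 * β) := by
  rw [← sq_mul_rpow_div_sq hω hΩ]
  exact mul_le_mul_of_nonneg_left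
    (one_sub_pinskerWeight_sq_le (sub_nonneg.2 hβ) (div_pos hω hΩ).le) (sq_nonneg _)

theorem sq_mul_one_sub_pinskerWeight_sq_mul_pinskerRatio (hβ : 1 ≤ β) (hω : 0 < ω)
    (hΩ : 0 < Ω) :
    ω ^ 2 * (1 - pinskerWeight (β - 1) (ω / Ω)) ^ 2 * pinskerRatio (β - 1) (ω / Ω) =
      Ω ^ (2 - 2 * β) * (ω ^ (2 * β) * pinskerRatio (β - 1) (ω / Ω)) := by
  rw [← mul_assoc, ← sq_mul_rpow_div_sq hω hΩ, mul_assoc, mul_assoc,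
    one_sub_pinskerWeight_sq_mul_pinskerRatio (sub_nonneg.2 hβ) (div_pos hω hΩ).le]

end Pinsker

/-- `g k` stands for the squared coefficient `f_k²`, so that the Pinsker signal enters through
`s_k²`. -/
noncomputable def risk (ω q : ℕ → ℝ) (ε : ℝ) (g : ℕ → ℝ) : ℝ :=
  ∑' k, ω k ^ 2 * ((1 - q k) ^ 2 * g k + ε ^ 2 * q k ^ 2)

section Risk

variable {β ε Ω : ℝ} {ω : ℕ → ℝ}

theorem risk_pinskerWeight_le (hβ : 1 ≤ β) (hω : ∀ k, 0 < ω k) (hΩ : 0 < Ω) {N : ℕ}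
    (hfar : ∀ k, N ≤ k → Ω ≤ ω k) {g : ℕ → ℝ} (hg : ∀ k, 0 ≤ g k)
    (hgβ : Summable fun k => ω k ^ (2 * β) * g k)
    (hball : ∑' k, ω k ^ (2 * β) * g k ≤
      ∑' k, ω k ^ (2 * β) * (ε ^ 2 * pinskerRatio (β - 1) (ω k / Ω))) :
    risk ω (fun k => pinskerWeight (β - 1) (ω k / Ω)) ε g ≤
      risk ω (fun k => pinskerWeight (β - 1) (ω k / Ω)) ε
        (fun k => ε ^ 2 * pinskerRatio (β - 1) (ω k / Ω)) := by
  have hp : 0 ≤ β - 1 := sub_nonneg.2 hβ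
  have hfar' : ∀ k, N ≤ k → 1 ≤ ω k / Ω := fun k hk => (one_le_div hΩ).2 (hfar k hk)
  have := tsum_mul_add_le_of_le_mul_of_mul_eq
    (a := fun k => ω k ^ 2 * (1 - pinskerWeight (β - 1) (ω k / Ω)) ^ 2)
    (r := fun k => ω k ^ 2 * (ε ^ 2 * pinskerWeight (β - 1) (ω k / Ω) ^ 2))
    (by positivity : 0 ≤ Ω ^ (2 - 2 * β)) (fun k => by positivity) hg
    (fun k => sq_mul_one_sub_pinskerWeight_sq_le hβ (hω k) hΩ)
    (fun k => by
      linear_combination ε ^ 2 * sq_mul_one_sub_pinskerWeight_sq_mul_pinskerRatio hβ (hω k) hΩ)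
    hgβ
    (summable_of_forall_le_eq_zero fun k hk => by
      rw [pinskerRatio_eq_zero hp (hfar' k hk)]; ring)
    (summable_of_forall_le_eq_zero fun k hk => by
      rw [pinskerWeight_eq_zero hp (hfar' k hk)]; ring)
    hball
  unfold risk
  convert this using 3 with k <;> ring

theorem risk_pinskerWeight_pinskerRatio (hβ : 1 ≤ β) (hω : ∀ k, 0 < ω k) (hΩ : 0 < Ω) :
    risk ω (fun k => pinskerWeight (β - 1) (ω k / Ω)) ε
        (fun k => ε ^ 2 * pinskerRatio (β - 1) (ω k / Ω)) =
      ε ^ 2 * ∑' k, ω k ^ 2 * pinskerWeight (β - 1) (ω k / Ω) := by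
  rw [risk, ← tsum_mul_left]
  refine tsum_congr fun k => ?_
  linear_combination ε ^ 2 * ω k ^ 2 *
    one_sub_pinskerWeight_sq_mul_pinskerRatio_add_sq (sub_nonneg.2 hβ) (div_pos (hω k) hΩ)

end Risk

theorem stmt8_general (β ε W : ℝ) (hβ : 1 < β) (hW : 0 < W)
    (f q s2 : ℕ → ℝ)
    (hq : ∀ k : ℕ, q k = max 0 (1 - (((k : ℝ) + 1) / W) ^ (β - 1)))
    (hs2 : ∀ k : ℕ, s2 k = ε ^ 2 * max 0 ((W / ((k : ℝ) + 1)) ^ (β - 1) - 1))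
    (hfβ : Summable (fun k : ℕ => (2 * π * ((k : ℝ) + 1)) ^ (2 * β) * (f k) ^ 2))
    (hball : (∑' k : ℕ, (2 * π * ((k : ℝ) + 1)) ^ (2 * β) * (f k) ^ 2)
      ≤ ∑' k : ℕ, (2 * π * ((k : ℝ) + 1)) ^ (2 * β) * s2 k) :
    (∑' k : ℕ, (2 * π * ((k : ℝ) + 1)) ^ 2 * ((1 - q k) ^ 2 * (f k) ^ 2 + ε ^ 2 * (q k) ^ 2))
      ≤ (∑' k : ℕ, (2 * π * ((k : ℝ) + 1)) ^ 2 * ((1 - q k) ^ 2 * s2 k + ε ^ 2 * (q k) ^ 2)) ∧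
    (∑' k : ℕ, (2 * π * ((k : ℝ) + 1)) ^ 2 * ((1 - q k) ^ 2 * s2 k + ε ^ 2 * (q k) ^ 2))
      = ε ^ 2 * ∑' k : ℕ, (2 * π * ((k : ℝ) + 1)) ^ 2 * q k := by
  set ω : ℕ → ℝ := fun k => 2 * π * ((k : ℝ) + 1)
  have hω : ∀ k, 0 < ω k := fun k => by positivity
  have hΩ : 0 < 2 * π * W := by positivity
  have hx : ∀ k : ℕ, ((k : ℝ) + 1) / W = ω k / (2 * π * W) := fun k =>
    (mul_div_mul_left _ W (by positivity : 2 * π ≠ 0)).symm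
  obtain rfl : q = fun k => pinskerWeight (β - 1) (ω k / (2 * π * W)) :=
    funext fun k => by rw [hq, ← hx]; rfl
  obtain rfl : s2 = fun k => ε ^ 2 * pinskerRatio (β - 1) (ω k / (2 * π * W)) :=
    funext fun k => by rw [hs2, pinskerRatio, ← hx, inv_div]
  have hfar : ∀ k, ⌈W⌉₊ ≤ k → 2 * π * W ≤ ω k := fun k hk => by
    have : W ≤ k := Nat.ceil_le.1 hk
    dsimp only [ω]; gcongr; linarith
  exact ⟨risk_pinskerWeight_le hβ.le hω hΩ hfar (fun k => sq_nonneg _) hfβ hball,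
    risk_pinskerWeight_pinskerRatio hβ.le hω hΩ⟩

/-- With Pinsker weights q_k = max(0, 1-(k/W)^{β-1}) and
s_k² = ε² max(0, (W/k)^{β-1} - 1), for every (f_k) satisfying the Sobolev
constraint Σ (2πk)^{2β} f_k² ≤ Σ (2πk)^{2β} s_k², the functional
R[f,q] = Σ (2πk)²[(1-q_k)² f_k² + ε² q_k²] satisfies
R[f,q] ≤ R[s,q] = ε² Σ (2πk)² q_k. -/
theorem stmt8 (β ε W : ℝ) (hβ : 1 < β) (hε : 0 < ε) (hW : 0 < W)
    (f q s2 : ℕ → ℝ)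
    (hq : ∀ k : ℕ, q k = max 0 (1 - (((k : ℝ) + 1) / W) ^ (β - 1)))
    (hs2 : ∀ k : ℕ, s2 k = ε ^ 2 * max 0 ((W / ((k : ℝ) + 1)) ^ (β - 1) - 1))
    (hfβ : Summable (fun k : ℕ => (2 * π * ((k : ℝ) + 1)) ^ (2 * β) * (f k) ^ 2))
    (hf2 : Summable (fun k : ℕ => (2 * π * ((k : ℝ) + 1)) ^ 2 * (f k) ^ 2))
    (hball : (∑' k : ℕ, (2 * π * ((k : ℝ) + 1)) ^ (2 * β) * (f k) ^ 2)
      ≤ ∑' k : ℕ, (2 * π * ((k : ℝ) + 1)) ^ (2 * β) * s2 k) :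
    (∑' k : ℕ, (2 * π * ((k : ℝ) + 1)) ^ 2 * ((1 - q k) ^ 2 * (f k) ^ 2 + ε ^ 2 * (q k) ^ 2))
      ≤ (∑' k : ℕ, (2 * π * ((k : ℝ) + 1)) ^ 2 * ((1 - q k) ^ 2 * s2 k + ε ^ 2 * (q k) ^ 2)) ∧
    (∑' k : ℕ, (2 * π * ((k : ℝ) + 1)) ^ 2 * ((1 - q k) ^ 2 * s2 k + ε ^ 2 * (q k) ^ 2))
      = ε ^ 2 * ∑' k : ℕ, (2 * π * ((k : ℝ) + 1)) ^ 2 * q k :=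
  stmt8_general β ε W hβ hW f q s2 hq hs2 hfβ hball
end

section
/- Let β > 1, L > 0, ε > 0. Suppose W_ε > 0 solves ε² Σ_k max(0, (W_ε/k)^{β-1} - 1) (2πk)^{2β} = L, let q_k = max(0, 1-(k/W_ε)^{β-1}) and s_k² = ε² max(0, (W_ε/k)^{β-1} - 1). Then s = (s_k) lies in the Sobolev ball W(β,L) = {f : Σ_k (2πk)^{2β} f_k² ≤ L}, and the minimizing weights for R[s,·] are exactly h_k = s_k²/(s_k²+ε²) = q_k, so that inf_h R[s,h] = R[s,q] = ε² Σ_k (2πk)² q_k. -/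
/-!
The risk decouples over frequencies, and in each coordinate `(1 - h)² s² + ε² h²` is a quadratic
in `h` minimised by the Wiener weight `s² / (s² + ε²)`, with minimum `ε²` times that weight.
For the Pinsker signal `s² = ε² max 0 ((W/k)^(β-1) - 1)` the Wiener weight is exactly
`max 0 (1 - (k/W)^(β-1))`, and the Sobolev energy of `s` is `L` by the defining equation of `W`.
-/

open Real

lemma max_zero_one_sub_eq_div (t c : ℝ) (ht : 0 < t) (hc : c ≠ 0) :
    max 0 (1 - t) = c * max 0 (t⁻¹ - 1) / (c * max 0 (t⁻¹ - 1) + c) := by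
  rcases le_or_gt t 1 with hle | hgt
  · have hinv : 1 ≤ t⁻¹ := one_le_inv_iff₀.mpr ⟨ht, hle⟩
    rw [max_eq_right (by linarith), max_eq_right (by linarith)]
    field_simp
    ring
  · have hinv : t⁻¹ < 1 := inv_lt_one_of_one_lt₀ hgt
    rw [max_eq_left (by linarith), max_eq_left (by linarith)]
    simp

lemma max_zero_one_sub_rpow_eq_div (x p c : ℝ) (hx : 0 < x) (hc : c ≠ 0) :
    max 0 (1 - x ^ p) = c * max 0 (x⁻¹ ^ p - 1) / (c * max 0 (x⁻¹ ^ p - 1) + c) := by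
  rw [inv_rpow hx.le]
  exact max_zero_one_sub_eq_div _ c (rpow_pos_of_pos hx p) hc

lemma sq_one_sub_div_mul_add (s e : ℝ) (hse : s + e ≠ 0) :
    (1 - s / (s + e)) ^ 2 * s + e * (s / (s + e)) ^ 2 = e * (s / (s + e)) := by
  field_simp
  ring

lemma mul_div_le_sq_one_sub_mul_add (s e h : ℝ) (hs : 0 ≤ s) (he : 0 < e) :
    e * (s / (s + e)) ≤ (1 - h) ^ 2 * s + e * h ^ 2 := by
  have hd : 0 < s + e := by positivity
  rw [mul_div_assoc', div_le_iff₀ hd]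
  nlinarith [sq_nonneg (h * (s + e) - s), sq_nonneg h, sq_nonneg (1 - h)]

lemma iInf_tsum_ofReal_eq_of_forall_le {ι α : Type*} (g : ι → α → ℝ) (q : ι → α)
    (hq : ∀ k x, g k (q k) ≤ g k x) :
    ⨅ h : ι → α, ∑' k, ENNReal.ofReal (g k (h k)) = ∑' k, ENNReal.ofReal (g k (q k)) :=
  le_antisymm (iInf_le _ q) <| le_iInf fun h =>
    ENNReal.tsum_le_tsum fun k => ENNReal.ofReal_le_ofReal (hq k (h k))

theorem stmt10_general (β L ε W : ℝ) (hε : 0 < ε) (hW : 0 < W)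
    (q s2 : ℕ → ℝ)
    (hq : ∀ k : ℕ, q k = max 0 (1 - (((k : ℝ) + 1) / W) ^ (β - 1)))
    (hs2 : ∀ k : ℕ, s2 k = ε ^ 2 * max 0 ((W / ((k : ℝ) + 1)) ^ (β - 1) - 1))
    (hWsol : ε ^ 2 * ∑' k : ℕ,
        max 0 ((W / ((k : ℝ) + 1)) ^ (β - 1) - 1) * (2 * π * ((k : ℝ) + 1)) ^ (2 * β) = L) :
    (∑' k : ℕ, (2 * π * ((k : ℝ) + 1)) ^ (2 * β) * s2 k ≤ L) ∧
    (∀ k : ℕ, q k = s2 k / (s2 k + ε ^ 2)) ∧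
    (⨅ h : ℕ → ℝ, ∑' k : ℕ, ENNReal.ofReal
        ((2 * π * ((k : ℝ) + 1)) ^ 2 * ((1 - h k) ^ 2 * s2 k + ε ^ 2 * (h k) ^ 2)))
      = (∑' k : ℕ, ENNReal.ofReal
          ((2 * π * ((k : ℝ) + 1)) ^ 2 * ((1 - q k) ^ 2 * s2 k + ε ^ 2 * (q k) ^ 2))) ∧
    (∑' k : ℕ, (2 * π * ((k : ℝ) + 1)) ^ 2 * ((1 - q k) ^ 2 * s2 k + ε ^ 2 * (q k) ^ 2))
      = ε ^ 2 * ∑' k : ℕ, (2 * π * ((k : ℝ) + 1)) ^ 2 * q k := by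
  have hs2_nonneg (k : ℕ) : 0 ≤ s2 k := by rw [hs2]; positivity
  have hq_wiener (k : ℕ) : q k = s2 k / (s2 k + ε ^ 2) := by
    have hx : 0 < ((k : ℝ) + 1) / W := by positivity
    rw [hq, hs2, max_zero_one_sub_rpow_eq_div _ (β - 1) (ε ^ 2) hx (by positivity), inv_div]
  have hrisk (k : ℕ) : (1 - q k) ^ 2 * s2 k + ε ^ 2 * q k ^ 2 = ε ^ 2 * q k := by
    rw [hq_wiener]
    exact sq_one_sub_div_mul_add _ _ (by have := hs2_nonneg k; positivity)
  refine ⟨?_, hq_wiener, ?_, ?_⟩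
  · rw [← hWsol, ← tsum_mul_left]
    exact (tsum_congr fun k => by rw [hs2]; ring).le
  · refine iInf_tsum_ofReal_eq_of_forall_le
      (fun (k : ℕ) x => (2 * π * ((k : ℝ) + 1)) ^ 2 * ((1 - x) ^ 2 * s2 k + ε ^ 2 * x ^ 2)) q
      fun k x => ?_
    refine mul_le_mul_of_nonneg_left ?_ (sq_nonneg _)
    rw [hrisk, hq_wiener]
    exact mul_div_le_sq_one_sub_mul_add _ _ x (hs2_nonneg k) (by positivity)
  · rw [← tsum_mul_left]
    exact tsum_congr fun k => by rw [hrisk]; ring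

/-- If W_ε solves the Pinsker equation
ε² Σ max(0,(W/k)^{β-1}-1)(2πk)^{2β} = L, with q_k = max(0,1-(k/W)^{β-1}) and
s_k² = ε² max(0,(W/k)^{β-1}-1), then s lies in the Sobolev ball W(β,L), the
minimizing weights for R[s,·] are h_k = s_k²/(s_k²+ε²) = q_k, and
inf_h R[s,h] = R[s,q] = ε² Σ (2πk)² q_k. -/
theorem stmt10 (β L ε W : ℝ) (hβ : 1 < β) (hL : 0 < L) (hε : 0 < ε) (hW : 0 < W)
    (q s2 : ℕ → ℝ)
    (hq : ∀ k : ℕ, q k = max 0 (1 - (((k : ℝ) + 1) / W) ^ (β - 1)))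
    (hs2 : ∀ k : ℕ, s2 k = ε ^ 2 * max 0 ((W / ((k : ℝ) + 1)) ^ (β - 1) - 1))
    (hWsol : ε ^ 2 * ∑' k : ℕ,
        max 0 ((W / ((k : ℝ) + 1)) ^ (β - 1) - 1) * (2 * π * ((k : ℝ) + 1)) ^ (2 * β) = L) :
    (∑' k : ℕ, (2 * π * ((k : ℝ) + 1)) ^ (2 * β) * s2 k ≤ L) ∧
    (∀ k : ℕ, q k = s2 k / (s2 k + ε ^ 2)) ∧
    (⨅ h : ℕ → ℝ, ∑' k : ℕ, ENNReal.ofReal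
        ((2 * π * ((k : ℝ) + 1)) ^ 2 * ((1 - h k) ^ 2 * s2 k + ε ^ 2 * (h k) ^ 2)))
      = (∑' k : ℕ, ENNReal.ofReal
          ((2 * π * ((k : ℝ) + 1)) ^ 2 * ((1 - q k) ^ 2 * s2 k + ε ^ 2 * (q k) ^ 2))) ∧
    (∑' k : ℕ, (2 * π * ((k : ℝ) + 1)) ^ 2 * ((1 - q k) ^ 2 * s2 k + ε ^ 2 * (q k) ^ 2))
      = ε ^ 2 * ∑' k : ℕ, (2 * π * ((k : ℝ) + 1)) ^ 2 * q k :=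
  stmt10_general β L ε W hε hW q s2 hq hs2 hWsol
end
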